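/- Let ρ and σ be n×n density matrices. Then λ(ρ − σ) ≺ λ(Λ↓(ρ) − E_nn), where E_nn = diag(0,…,0,1); equivalently, the eigenvalue vector of ρ − σ is majorized by the vector (λ_1(ρ), λ_2(ρ), …, λ_{n−1}(ρ), λ_n(ρ) − 1). -/

import Mathlib

open Matrix
open scoped ComplexOrder Classical

/-- The vector of a tuple's entries sorted in decreasing (nonincreasing) order. -/
noncomputable def sortDec {n : ℕ} (x : Fin n → ℝ) : Fin n → ℝ :=
  fun i => x (Tuple.sort x i.rev)

/-- The eigenvalues of a Hermitian matrix arranged in decreasing order,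
`λ(A)`; junk value `0` if `A` is not Hermitian. -/
noncomputable def eigsDec {n : ℕ} (A : Matrix (Fin n) (Fin n) ℂ) : Fin n → ℝ :=
  if hA : A.IsHermitian then sortDec hA.eigenvalues else 0

/-- The eigenvalues of a Hermitian matrix arranged in increasing order. -/
noncomputable def eigsInc {n : ℕ} (A : Matrix (Fin n) (Fin n) ℂ) : Fin n → ℝ :=
  fun i => eigsDec A i.rev

/-- `Λ↓(A)`: the diagonal matrix of the eigenvalues of `A` in decreasing order. -/
noncomputable def LambdaDown {n : ℕ} (A : Matrix (Fin n) (Fin n) ℂ) :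
    Matrix (Fin n) (Fin n) ℂ :=
  Matrix.diagonal fun i => (eigsDec A i : ℂ)

/-- `Λ↑(A)`: the diagonal matrix of the eigenvalues of `A` in increasing order. -/
noncomputable def LambdaUp {n : ℕ} (A : Matrix (Fin n) (Fin n) ℂ) :
    Matrix (Fin n) (Fin n) ℂ :=
  Matrix.diagonal fun i => (eigsInc A i : ℂ)

/-- `x ≺ y`: the sum of the `k` largest entries of `x` is at most that of `y`
for every `k`, with equality of the total sums. -/
def Majorizes {n : ℕ} (x y : Fin n → ℝ) : Prop :=
  (∀ k : ℕ, ∑ i ∈ Finset.univ.filter (fun i : Fin n => (i : ℕ) < k), sortDec x i ≤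
      ∑ i ∈ Finset.univ.filter (fun i : Fin n => (i : ℕ) < k), sortDec y i) ∧
    (∑ i, x i) = ∑ i, y i

/-- A function `d` is Schur-convex if `x ≺ y` implies `d x ≤ d y`. -/
def SchurConvex {n : ℕ} (d : (Fin n → ℝ) → ℝ) : Prop :=
  ∀ x y : Fin n → ℝ, Majorizes x y → d x ≤ d y

/-- A density matrix: positive semidefinite with trace one. -/
def IsDensityMatrix {n : ℕ} (ρ : Matrix (Fin n) (Fin n) ℂ) : Prop :=
  ρ.PosSemidef ∧ ρ.trace = 1

/-- A quantum channel: completely positive trace preserving map in Kraus form. -/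
def IsQuantumChannel {n : ℕ}
    (Φ : Matrix (Fin n) (Fin n) ℂ → Matrix (Fin n) (Fin n) ℂ) : Prop :=
  ∃ (r : ℕ) (F : Fin r → Matrix (Fin n) (Fin n) ℂ),
    (∑ j, (F j)ᴴ * F j) = 1 ∧ ∀ X, Φ X = ∑ j, F j * X * (F j)ᴴ

/-- A unital quantum channel. -/
def IsUnitalChannel {n : ℕ}
    (Φ : Matrix (Fin n) (Fin n) ℂ → Matrix (Fin n) (Fin n) ℂ) : Prop :=
  IsQuantumChannel Φ ∧ Φ 1 = 1

/-- A mixed unitary channel: a convex combination of unitary conjugations. -/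
def IsMixedUnitaryChannel {n : ℕ}
    (Φ : Matrix (Fin n) (Fin n) ℂ → Matrix (Fin n) (Fin n) ℂ) : Prop :=
  ∃ (r : ℕ) (t : Fin r → ℝ) (U : Fin r → Matrix (Fin n) (Fin n) ℂ),
    (∀ j, 0 ≤ t j) ∧ (∑ j, t j) = 1 ∧
      (∀ j, U j ∈ Matrix.unitaryGroup (Fin n) ℂ) ∧
      ∀ X, Φ X = ∑ j, (t j : ℂ) • (U j * X * (U j)ᴴ)

/-- Functional calculus: `f(A)` for a Hermitian matrix `A`, via the spectral theorem;
junk value `0` if `A` is not Hermitian. -/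
noncomputable def matFun {n : ℕ} (f : ℝ → ℝ) (A : Matrix (Fin n) (Fin n) ℂ) :
    Matrix (Fin n) (Fin n) ℂ :=
  if hA : A.IsHermitian then
    (hA.eigenvectorUnitary : Matrix (Fin n) (Fin n) ℂ) *
      Matrix.diagonal (fun i => (f (hA.eigenvalues i) : ℂ)) *
      (hA.eigenvectorUnitary : Matrix (Fin n) (Fin n) ℂ)ᴴ
  else 0

/-- The positive semidefinite square root of a PSD matrix, as `Matrix.PosSemidef.sqrt`
was defined in Mathlib (December 2024). -/
noncomputable def psdSqrt {n : ℕ} {A : Matrix (Fin n) (Fin n) ℂ} (hA : A.PosSemidef) :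
    Matrix (Fin n) (Fin n) ℂ :=
  hA.1.eigenvectorUnitary.1 * diagonal ((↑) ∘ (Real.sqrt ∘ hA.1.eigenvalues)) *
    (star hA.1.eigenvectorUnitary : Matrix (Fin n) (Fin n) ℂ)

/-- `|A| = (AᴴA)^{1/2}`. -/
noncomputable def matAbs {n : ℕ} (A : Matrix (Fin n) (Fin n) ℂ) :
    Matrix (Fin n) (Fin n) ℂ :=
  psdSqrt (Matrix.posSemidef_conjTranspose_mul_self A)

/-- `tr|A|`, the sum of the singular values of `A`. -/
noncomputable def traceAbs {n : ℕ} (A : Matrix (Fin n) (Fin n) ℂ) : ℝ :=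
  ((matAbs A).trace).re

/-- The singular values of `A` in decreasing order. -/
noncomputable def singVals {n : ℕ} (A : Matrix (Fin n) (Fin n) ℂ) : Fin n → ℝ :=
  eigsDec (matAbs A)

/-- The positive semidefinite square root of a PSD matrix (junk value `0` otherwise). -/
noncomputable def matSqrt {n : ℕ} (A : Matrix (Fin n) (Fin n) ℂ) :
    Matrix (Fin n) (Fin n) ℂ :=
  if hA : A.PosSemidef then psdSqrt hA else 0

/-- The fidelity `F(ρ,σ) = tr|ρ^{1/2} σ^{1/2}|`. -/
noncomputable def fidelity {n : ℕ} (ρ σ : Matrix (Fin n) (Fin n) ℂ) : ℝ :=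
  traceAbs (matSqrt ρ * matSqrt σ)

/-- The relative entropy `S(ρ‖σ) = tr(ρ (log ρ - log σ))`. -/
noncomputable def relEntropy {n : ℕ} (ρ σ : Matrix (Fin n) (Fin n) ℂ) : ℝ :=
  ((ρ * (matFun Real.log ρ - matFun Real.log σ)).trace).re

/-- The (real) trace of a matrix whose trace is real. -/
noncomputable def trR {n : ℕ} (A : Matrix (Fin n) (Fin n) ℂ) : ℝ := A.trace.re

/-! For `k < n`, the sum of the `k` largest eigenvalues of `ρ - σ` is `tr P(ρ - σ)`, where
`P` is the spectral projection of `ρ - σ` onto its top `k` eigenvectors. Since `σ ≥ 0` we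
have `tr Pσ ≥ 0`, and since `0 ≤ P ≤ 1` with `tr P = k`, Ky Fan's maximum principle bounds
`tr Pρ` by `λ_1(ρ) + ⋯ + λ_k(ρ)`. The entry `-1` only matters for `k = n`, where both sides
equal `0` because `ρ` and `σ` both have trace one. -/

open Finset

section Sorting

variable {n : ℕ}

lemma antitone_sortDec (x : Fin n → ℝ) : Antitone (sortDec x) :=
  fun _ _ hij => Tuple.monotone_sort x (Fin.rev_le_rev.mpr hij)

lemma sortDec_eq_self_of_antitone {x : Fin n → ℝ} (hx : Antitone x) : sortDec x = x := by
  have hsort := Tuple.comp_sort_eq_comp_iff_monotone.mpr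
    (hx.comp fun _ _ => Fin.rev_le_rev.mpr : Monotone (x ∘ Fin.revPerm))
  funext i
  simpa [sortDec] using (congrFun hsort i.rev).symm

lemma antitone_eigsDec (A : Matrix (Fin n) (Fin n) ℂ) : Antitone (eigsDec A) := by
  unfold eigsDec
  split
  · exact antitone_sortDec _
  · exact antitone_const

lemma Antitone.sub_ite_last {x : Fin n → ℝ} (hx : Antitone x) {c : ℝ} (hc : 0 ≤ c) :
    Antitone fun i : Fin n => x i - if (i : ℕ) = n - 1 then c else 0 := by
  intro i j hij
  have hlast : (i : ℕ) = n - 1 → (j : ℕ) = n - 1 := fun _ => by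
    have : (i : ℕ) ≤ j := hij
    omega
  have := hx hij
  dsimp only
  split_ifs with hj hi hi
  all_goals first | linarith | exact absurd (hlast hi) hj

end Sorting

namespace Matrix.IsHermitian

variable {n : ℕ} {A : Matrix (Fin n) (Fin n) ℂ}

noncomputable def eigsDecPerm (hA : A.IsHermitian) : Equiv.Perm (Fin n) :=
  Fin.revPerm.trans (Tuple.sort hA.eigenvalues)

lemma eigsDec_eq (hA : A.IsHermitian) (i : Fin n) :
    eigsDec A i = hA.eigenvalues (hA.eigsDecPerm i) := by
  simp [eigsDec, hA, sortDec, eigsDecPerm]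

lemma sum_eigsDec (hA : A.IsHermitian) : ∑ i, eigsDec A i = A.trace.re := by
  simp [hA.eigsDec_eq, Equiv.sum_comp, hA.trace_eq_sum_eigenvalues, Complex.re_sum]

end Matrix.IsHermitian

section Trace

variable {𝕜 ι : Type*} [RCLike 𝕜] [Fintype ι] [DecidableEq ι]

lemma Matrix.IsHermitian.trace_mul_eq_sum_mul_eigenvalues {A : Matrix ι ι 𝕜}
    (hA : A.IsHermitian) (B : Matrix ι ι 𝕜) :
    (B * A).trace = ∑ i,
      (star (hA.eigenvectorUnitary : Matrix ι ι 𝕜) * B * hA.eigenvectorUnitary) i i *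
        hA.eigenvalues i := by
  conv_lhs => rw [hA.spectral_theorem, Unitary.conjStarAlgAut_apply]
  rw [← Matrix.mul_assoc, ← Matrix.mul_assoc, Matrix.trace_mul_cycle, ← Matrix.mul_assoc]
  simp [Matrix.trace, Matrix.mul_diagonal]

lemma Matrix.PosSemidef.trace_mul_nonneg {A B : Matrix ι ι 𝕜} (hA : A.PosSemidef)
    (hB : B.PosSemidef) : 0 ≤ (B * A).trace := by
  rw [hA.isHermitian.trace_mul_eq_sum_mul_eigenvalues]
  refine Finset.sum_nonneg fun i _ => mul_nonneg ?_ (by simpa using hA.eigenvalues_nonneg i)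
  set U : Matrix ι ι 𝕜 := (hA.isHermitian.eigenvectorUnitary : Matrix ι ι 𝕜)
  simpa [Matrix.star_eq_conjTranspose] using (hB.conjTranspose_mul_mul_same U).diag_nonneg

end Trace

lemma sum_mul_le_sum_filter_lt_of_antitone {n k : ℕ} (hk : k < n) {D c : Fin n → ℝ}
    (hD : Antitone D) (hc0 : ∀ i, 0 ≤ c i) (hc1 : ∀ i, c i ≤ 1) (hc : ∑ i, c i = k) :
    ∑ i, D i * c i ≤ ∑ i ∈ univ.filter (fun i : Fin n => (i : ℕ) < k), D i := by
  -- Against the pivot `t = D k`, moving weight from indices `< k` to indices `≥ k` never helps.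
  set t := D ⟨k, hk⟩
  have hterm : ∀ i : Fin n, D i * c i - (if (i : ℕ) < k then D i else 0) ≤
      t * (c i - if (i : ℕ) < k then 1 else 0) := by
    intro i
    split_ifs with hi
    · nlinarith [hD (show i ≤ ⟨k, hk⟩ from Fin.le_def.mpr hi.le), hc1 i]
    · nlinarith [hD (show (⟨k, hk⟩ : Fin n) ≤ i from Fin.le_def.mpr (not_lt.mp hi)), hc0 i]
  have hcard : ∑ i : Fin n, (if (i : ℕ) < k then (1 : ℝ) else 0) = k := by
    simp [Fin.card_filter_val_lt, hk.le]
  have hsum := sum_le_sum fun i (_ : i ∈ univ) => hterm i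
  rw [sum_sub_distrib, ← mul_sum, sum_sub_distrib, hc, hcard, sub_self, mul_zero,
    ← sum_filter] at hsum
  linarith

lemma re_trace_mul_le_sum_eigsDec {n k : ℕ} (hk : k < n) {A P : Matrix (Fin n) (Fin n) ℂ}
    (hA : A.IsHermitian) (hP : P.PosSemidef) (hP1 : (1 - P).PosSemidef) (htr : P.trace = k) :
    (P * A).trace.re ≤ ∑ i ∈ univ.filter (fun i : Fin n => (i : ℕ) < k), eigsDec A i := by
  set U : Matrix (Fin n) (Fin n) ℂ := (hA.eigenvectorUnitary : Matrix (Fin n) (Fin n) ℂ)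
  have hUU : star U * U = 1 := Unitary.star_mul_self_of_mem hA.eigenvectorUnitary.2
  have hUU' : U * star U = 1 := Unitary.mul_star_self_of_mem hA.eigenvectorUnitary.2
  set c : Fin n → ℝ := fun i => ((star U * P * U) i i).re
  have hc0 : ∀ i, 0 ≤ c i := fun i =>
    (Complex.nonneg_iff.mp (by simpa [star_eq_conjTranspose] using
      (hP.conjTranspose_mul_mul_same U).diag_nonneg (i := i))).1
  have hc1 : ∀ i, c i ≤ 1 := by
    intro i
    have h := (Complex.nonneg_iff.mp ((hP1.conjTranspose_mul_mul_same U).diag_nonneg (i := i))).1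
    have hU : Uᴴ * (1 - P) * U = 1 - star U * P * U := by
      rw [Matrix.mul_sub, Matrix.sub_mul, Matrix.mul_one, ← star_eq_conjTranspose, hUU]
    simpa [hU, c, Matrix.one_apply_eq] using h
  have hc : ∑ i, c i = k := by
    have : (star U * P * U).trace = k := by
      rw [Matrix.trace_mul_cycle, hUU', Matrix.one_mul, htr]
    simpa [c, Matrix.trace, Complex.re_sum] using congrArg Complex.re this
  calc (P * A).trace.re = ∑ i, hA.eigenvalues i * c i := by
        simp [hA.trace_mul_eq_sum_mul_eigenvalues P, Complex.re_sum, c, U, mul_comm]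
    _ = ∑ i, eigsDec A i * c (hA.eigsDecPerm i) := by
        simp only [hA.eigsDec_eq]
        exact (Equiv.sum_comp hA.eigsDecPerm fun i => hA.eigenvalues i * c i).symm
    _ ≤ _ := sum_mul_le_sum_filter_lt_of_antitone hk (antitone_eigsDec A) (fun _ => hc0 _)
        (fun _ => hc1 _) (by rw [Equiv.sum_comp hA.eigsDecPerm c, hc])

lemma exists_re_trace_mul_eq_sum_eigsDec {n k : ℕ} (hk : k ≤ n) {A : Matrix (Fin n) (Fin n) ℂ}
    (hA : A.IsHermitian) :
    ∃ P : Matrix (Fin n) (Fin n) ℂ, P.PosSemidef ∧ (1 - P).PosSemidef ∧ P.trace = k ∧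
      (P * A).trace.re = ∑ i ∈ univ.filter (fun i : Fin n => (i : ℕ) < k), eigsDec A i := by
  set U : Matrix (Fin n) (Fin n) ℂ := (hA.eigenvectorUnitary : Matrix (Fin n) (Fin n) ℂ)
  have hUU : star U * U = 1 := Unitary.star_mul_self_of_mem hA.eigenvectorUnitary.2
  have hUU' : U * star U = 1 := Unitary.mul_star_self_of_mem hA.eigenvectorUnitary.2
  set e := hA.eigsDecPerm
  set d : Fin n → ℂ := fun j => if ((e.symm j : Fin n) : ℕ) < k then 1 else 0
  have hd : ∀ j, 0 ≤ d j ∧ d j ≤ 1 := fun j => by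
    by_cases h : ((e.symm j : Fin n) : ℕ) < k <;> simp [d, h]
  refine ⟨U * diagonal d * star U, ?_, ?_, ?_, ?_⟩
  · simpa [star_eq_conjTranspose] using
      (PosSemidef.diagonal fun j => (hd j).1).mul_mul_conjTranspose_same U
  · have h1 : 1 - U * diagonal d * star U = U * diagonal (fun j => 1 - d j) * star U := by
      rw [← diagonal_sub, diagonal_one, Matrix.mul_sub, Matrix.sub_mul, Matrix.mul_one, hUU']
    rw [h1]
    simpa [star_eq_conjTranspose] using
      (PosSemidef.diagonal fun j => sub_nonneg.mpr (hd j).2).mul_mul_conjTranspose_same U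
  · rw [trace_mul_cycle, hUU, Matrix.one_mul, trace_diagonal, ← Equiv.sum_comp e d]
    simp [d, Fin.card_filter_val_lt, hk]
  · have hD : star U * (U * diagonal d * star U) * U = diagonal d := by
      simp only [← Matrix.mul_assoc, hUU, Matrix.one_mul]
      rw [Matrix.mul_assoc, hUU, Matrix.mul_one]
    rw [hA.trace_mul_eq_sum_mul_eigenvalues, hD, ← Equiv.sum_comp e, Complex.re_sum, sum_filter]
    refine sum_congr rfl fun i _ => ?_
    by_cases h : (i : ℕ) < k <;> simp [d, h, hA.eigsDec_eq, e]

lemma sum_eigsDec_sub_le {n k : ℕ} (hk : k < n) {A B : Matrix (Fin n) (Fin n) ℂ}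
    (hA : A.IsHermitian) (hB : B.PosSemidef) :
    ∑ i ∈ univ.filter (fun i : Fin n => (i : ℕ) < k), eigsDec (A - B) i ≤
      ∑ i ∈ univ.filter (fun i : Fin n => (i : ℕ) < k), eigsDec A i := by
  obtain ⟨P, hP, hP1, htr, hPAB⟩ :=
    exists_re_trace_mul_eq_sum_eigsDec hk.le (hA.sub hB.isHermitian)
  have hPB : 0 ≤ (P * B).trace.re := (Complex.nonneg_iff.mp (hB.trace_mul_nonneg hP)).1
  calc _ = (P * A).trace.re - (P * B).trace.re := by
        rw [← hPAB, Matrix.mul_sub, trace_sub, Complex.sub_re]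
    _ ≤ (P * A).trace.re := sub_le_self _ hPB
    _ ≤ _ := re_trace_mul_le_sum_eigsDec hk hA hP hP1 htr

/-- For density matrices `ρ, σ`, the eigenvalue vector of `ρ - σ` is majorized
by `(λ_1(ρ), …, λ_{n-1}(ρ), λ_n(ρ) - 1)`. -/
theorem stmt_7 {n : ℕ} (ρ σ : Matrix (Fin n) (Fin n) ℂ)
    (hρ : IsDensityMatrix ρ) (hσ : IsDensityMatrix σ) :
    Majorizes (eigsDec (ρ - σ))
      (fun i : Fin n => eigsDec ρ i - if (i : ℕ) = n - 1 then 1 else 0) := by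
  obtain ⟨hρ, hρtr⟩ := hρ
  obtain ⟨hσ, hσtr⟩ := hσ
  have hn : 0 < n := Nat.pos_of_ne_zero fun h => by subst h; simp at hρtr
  have hx : ∑ i, eigsDec (ρ - σ) i = 0 := by
    simp [(hρ.isHermitian.sub hσ.isHermitian).sum_eigsDec, hρtr, hσtr]
  have hy : ∑ i : Fin n, (eigsDec ρ i - if (i : ℕ) = n - 1 then 1 else 0) = 0 := by
    have hlast : univ.filter (fun i : Fin n => (i : ℕ) = n - 1) = {⟨n - 1, by omega⟩} := by
      ext i
      simp [Fin.ext_iff]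
    simp [sum_sub_distrib, hρ.isHermitian.sum_eigsDec, hρtr, hlast]
  refine ⟨fun k => ?_, hx.trans hy.symm⟩
  rw [sortDec_eq_self_of_antitone (antitone_eigsDec _),
    sortDec_eq_self_of_antitone ((antitone_eigsDec ρ).sub_ite_last zero_le_one)]
  rcases lt_or_ge k n with hk | hk
  · refine (sum_eigsDec_sub_le hk hρ.isHermitian hσ).trans_eq (sum_congr rfl fun i hi => ?_)
    have : (i : ℕ) ≠ n - 1 := by simp at hi; omega
    simp [this]
  · rw [filter_true_of_mem fun i _ => i.2.trans_le hk, hx, hy]
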